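/- arXiv:2004.03171 — 2 statements merged into one kernel-verified Lean document; each statement's English description precedes it below -/
import Mathlib

section
/- Let T be the (q+1)-homogeneous rooted tree, q ≥ 1, and φ a self-map of T. Then C_φ is an isometry on T_∞ (i.e. ‖f ∘ φ‖_∞ = ‖f‖_∞ for all f ∈ T_∞) if and only if φ is surjective. -/
open scoped BigOperators Classical

noncomputable section

/-- `treeC q n` is the number `c_n` of vertices at level `n` of the
`(q+1)`-homogeneous rooted tree: `c_0 = 1` and `c_n = (q+1) q^(n-1)` for `n ≥ 1`. -/
def treeC (q n : ℕ) : ℕ := if n = 0 then 1 else (q + 1) * q ^ (n - 1)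

/-- An abstract `(q+1)`-homogeneous rooted tree, described by its vertex set, root,
level function `|·|` (graph distance to the root), and the level counts:
level `n` contains exactly `c_n = treeC q n` vertices. -/
structure HomTree (q : ℕ) where
  V : Type
  root : V
  level : V → ℕ
  level_eq_zero_iff : ∀ v : V, level v = 0 ↔ v = root
  finiteLevel : ∀ n : ℕ, {v : V | level v = n}.Finite
  card_level : ∀ n : ℕ, (finiteLevel n).toFinset.card = treeC q n

namespace HomTree

variable {q : ℕ} (T : HomTree q)

/-- The set `D_n` of vertices of level `n`, as a finset. -/
def levelFinset (n : ℕ) : Finset T.V := (T.finiteLevel n).toFinset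

/-- `M_p(n, f)` for `0 < p < ∞`:
`M_p(n,f) = ((1/c_n) ∑_{|v|=n} |f v|^p)^(1/p)` (which equals `|f o|` for `n = 0`). -/
def Mp (p : ℝ) (n : ℕ) (f : T.V → ℂ) : ℝ :=
  ((1 / (treeC q n : ℝ)) * ∑ v ∈ T.levelFinset n, ‖f v‖ ^ p) ^ (1 / p)

/-- `M_∞(n, f) = max_{|v| = n} |f v|`. -/
def Minf (n : ℕ) (f : T.V → ℂ) : ℝ :=
  sSup ((fun v => ‖f v‖) '' {v : T.V | T.level v = n})

/-- `f ∈ T_p`, i.e. `‖f‖_p = sup_n M_p(n,f) < ∞`. -/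
def memTp (p : ℝ) (f : T.V → ℂ) : Prop := BddAbove (Set.range fun n => T.Mp p n f)

/-- `‖f‖_p = sup_n M_p(n, f)`. -/
def normTp (p : ℝ) (f : T.V → ℂ) : ℝ := ⨆ n, T.Mp p n f

/-- `f ∈ T_∞`. -/
def memTinf (f : T.V → ℂ) : Prop := BddAbove (Set.range fun n => T.Minf n f)

/-- `‖f‖_∞ = sup_n M_∞(n, f)`. -/
def normTinf (f : T.V → ℂ) : ℝ := ⨆ n, T.Minf n f

/-- `f ∈ T_{p,0}`: `f ∈ T_p` and `M_p(n,f) → 0` as `n → ∞`. -/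
def memTp0 (p : ℝ) (f : T.V → ℂ) : Prop :=
  T.memTp p f ∧ Filter.Tendsto (fun n => T.Mp p n f) Filter.atTop (nhds 0)

/-- `f ∈ T_{∞,0}`. -/
def memTinf0 (f : T.V → ℂ) : Prop :=
  T.memTinf f ∧ Filter.Tendsto (fun n => T.Minf n f) Filter.atTop (nhds 0)

/-- `N_φ(n, w)`: the number of preimages of `w` under `φ` at level `n`. -/
def Nphi (phi : T.V → T.V) (n : ℕ) (w : T.V) : ℕ :=
  ((T.levelFinset n).filter fun v => phi v = w).card

/-- `N_{m,n} = max_{|w| = m} N_φ(n, w)`. -/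
def Nmax (phi : T.V → T.V) (m n : ℕ) : ℕ :=
  (T.levelFinset m).sup fun w => T.Nphi phi n w

/-- `C_φ` is a bounded operator on `T_p`: it maps `T_p` into `T_p` and
`‖f ∘ φ‖_p ≤ C ‖f‖_p` for some constant `C`. -/
def BoundedCompTp (p : ℝ) (phi : T.V → T.V) : Prop :=
  (∀ f : T.V → ℂ, T.memTp p f → T.memTp p (f ∘ phi)) ∧
  ∃ C : ℝ, ∀ f : T.V → ℂ, T.memTp p f → T.normTp p (f ∘ phi) ≤ C * T.normTp p f

/-- The operator norm of `C_φ` on `T_p`: `sup {‖f ∘ φ‖_p : f ∈ T_p, ‖f‖_p = 1}`. -/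
def opNormTp (p : ℝ) (phi : T.V → T.V) : ℝ :=
  sSup {x : ℝ | ∃ f : T.V → ℂ, T.memTp p f ∧ T.normTp p f = 1 ∧ x = T.normTp p (f ∘ phi)}

/-- `C_φ` is a bounded operator on `T_{p,0}`. -/
def BoundedCompTp0 (p : ℝ) (phi : T.V → T.V) : Prop :=
  (∀ f : T.V → ℂ, T.memTp0 p f → T.memTp0 p (f ∘ phi)) ∧
  ∃ C : ℝ, ∀ f : T.V → ℂ, T.memTp0 p f → T.normTp p (f ∘ phi) ≤ C * T.normTp p f

/-- The operator norm of `C_φ` on `T_{p,0}`. -/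
def opNormTp0 (p : ℝ) (phi : T.V → T.V) : ℝ :=
  sSup {x : ℝ | ∃ f : T.V → ℂ, T.memTp0 p f ∧ T.normTp p f = 1 ∧ x = T.normTp p (f ∘ phi)}

/-- `C_φ` is a bounded operator on `T_{∞,0}`. -/
def BoundedCompTinf0 (phi : T.V → T.V) : Prop :=
  (∀ f : T.V → ℂ, T.memTinf0 f → T.memTinf0 (f ∘ phi)) ∧
  ∃ C : ℝ, ∀ f : T.V → ℂ, T.memTinf0 f → T.normTinf (f ∘ phi) ≤ C * T.normTinf f

end HomTree

/-! Since every level of the tree is finite and the root exists, `‖f‖_∞` is simply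
`sup_v |f v|`. Hence `‖f ∘ φ‖_∞ ≤ ‖f‖_∞`, with equality when `φ` is surjective, while the
indicator of a vertex outside the range of `φ` has norm `1` but is sent to `0` by `C_φ`. -/

namespace HomTree

variable {q : ℕ} (T : HomTree q)

lemma norm_le_Minf (f : T.V → ℂ) (v : T.V) : ‖f v‖ ≤ T.Minf (T.level v) f :=
  le_csSup ((T.finiteLevel (T.level v)).image _).bddAbove ⟨v, rfl, rfl⟩

lemma Minf_le {f : T.V → ℂ} {n : ℕ} {B : ℝ} (hB : 0 ≤ B)
    (h : ∀ v, T.level v = n → ‖f v‖ ≤ B) : T.Minf n f ≤ B :=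
  Real.sSup_le (by rintro _ ⟨v, hv, rfl⟩; exact h v hv) hB

variable {T}

lemma memTinf_of_forall_norm_le {f : T.V → ℂ} {B : ℝ} (h : ∀ v, ‖f v‖ ≤ B) : T.memTinf f :=
  ⟨B, by
    rintro _ ⟨n, rfl⟩
    exact T.Minf_le ((norm_nonneg _).trans (h T.root)) fun v _ => h v⟩

lemma normTinf_le {f : T.V → ℂ} {B : ℝ} (h : ∀ v, ‖f v‖ ≤ B) : T.normTinf f ≤ B :=
  ciSup_le fun _ => T.Minf_le ((norm_nonneg _).trans (h T.root)) fun v _ => h v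

lemma norm_le_normTinf {f : T.V → ℂ} (hf : T.memTinf f) (v : T.V) : ‖f v‖ ≤ T.normTinf f :=
  (T.norm_le_Minf f v).trans (le_ciSup hf _)

lemma memTinf_comp {f : T.V → ℂ} (hf : T.memTinf f) (phi : T.V → T.V) :
    T.memTinf (f ∘ phi) :=
  memTinf_of_forall_norm_le fun v => norm_le_normTinf hf (phi v)

lemma normTinf_comp_le {f : T.V → ℂ} (hf : T.memTinf f) (phi : T.V → T.V) :
    T.normTinf (f ∘ phi) ≤ T.normTinf f :=
  normTinf_le fun v => norm_le_normTinf hf (phi v)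

lemma normTinf_le_normTinf_comp {f : T.V → ℂ} (hf : T.memTinf f) {phi : T.V → T.V}
    (hphi : Function.Surjective phi) : T.normTinf f ≤ T.normTinf (f ∘ phi) :=
  normTinf_le fun w => by
    obtain ⟨v, rfl⟩ := hphi w
    exact norm_le_normTinf (memTinf_comp hf phi) v

lemma surjective_of_normTinf_comp_eq {phi : T.V → T.V}
    (h : ∀ f : T.V → ℂ, T.memTinf f → T.normTinf (f ∘ phi) = T.normTinf f) :
    Function.Surjective phi := by
  intro w
  by_contra! hw
  set f : T.V → ℂ := fun u => if u = w then 1 else 0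
  have hf_bdd : ∀ u, ‖f u‖ ≤ 1 := fun u => by by_cases hu : u = w <;> simp [f, hu]
  have hf : T.memTinf f := memTinf_of_forall_norm_le hf_bdd
  have hcomp_zero : T.normTinf (f ∘ phi) ≤ 0 := normTinf_le fun v => by simp [f, hw v]
  have hf_one : 1 ≤ T.normTinf f := by simpa [f] using norm_le_normTinf hf w
  linarith [h f hf]

end HomTree

theorem isometry_comp_Tinf_iff_general (q : ℕ) (T : HomTree q) (phi : T.V → T.V) :
    ((∀ f : T.V → ℂ, T.memTinf f → T.memTinf (f ∘ phi)) ∧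
      (∀ f : T.V → ℂ, T.memTinf f → T.normTinf (f ∘ phi) = T.normTinf f)) ↔
    Function.Surjective phi :=
  ⟨fun ⟨_, hnorm⟩ => HomTree.surjective_of_normTinf_comp_eq hnorm,
    fun hphi => ⟨fun _ hf => HomTree.memTinf_comp hf phi, fun _ hf =>
      le_antisymm (HomTree.normTinf_comp_le hf phi) (HomTree.normTinf_le_normTinf_comp hf hphi)⟩⟩

/-- `C_φ` is an isometry on `T_∞` iff `φ` is surjective. -/
theorem isometry_comp_Tinf_iff (q : ℕ) (hq : 1 ≤ q) (T : HomTree q) (phi : T.V → T.V) :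
    ((∀ f : T.V → ℂ, T.memTinf f → T.memTinf (f ∘ phi)) ∧
      (∀ f : T.V → ℂ, T.memTinf f → T.normTinf (f ∘ phi) = T.normTinf f)) ↔
    Function.Surjective phi :=
  isometry_comp_Tinf_iff_general q T phi
end
end

section
/- Let T be the 2-homogeneous rooted tree (q = 1), let φ be a self-map of T and let 1 ≤ p < ∞. Then C_φ is an isometry on T_p (i.e. ‖f ∘ φ‖_p = ‖f‖_p for all f ∈ T_p) if and only if all of the following hold: (1) φ(o) = o; (2) φ is surjective; (3) |φ(v)| = |φ(w)| whenever |v| = |w|; (4) whenever φ(w) ≠ o for some w ∈ T, the restriction of φ to D_{|w|} is injective. -/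
open scoped BigOperators Classical

noncomputable section

/-!
For a set `S` meeting each level at most once, weight its vertices by `c_{|u|}^{1/p}`; the
resulting `f_S` has `M_p(n, f_S) ≤ 1` for all `n`. If `C_φ` does not increase norms and `φ(D_n)`
is such a set, then `M_p(n, f_S ∘ φ)^p = (1/c_n) ∑_{v ∈ D_n} c_{|φ v|} ≤ 1` forces
`φ(D_n) = {o}`, since `c_m > 1` for `m ≥ 1`. For `q = 1` every level `D_n`, `n ≥ 1`, is a pair
`{v, w}`, so either `φ v = φ w = o` or `φ v ≠ φ w` lie on a common level; with `D_0 = {o}` this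
gives (1), (3) and (4). Surjectivity: `C_φ` kills `f_{{w}}` when `w ∉ range φ`.

Conversely, (1), (3) and (4) say that `φ` maps each level either to the root or bijectively onto
another level, so `M_p(|v|, f ∘ φ) = M_p(|φ v|, f)`; since `φ` is onto, the sequences
`M_p(·, f ∘ φ)` and `M_p(·, f)` have the same set of values.
-/

open Finset Function

theorem treeC_pos {q : ℕ} (hq : 0 < q) (n : ℕ) : 0 < treeC q n := by
  unfold treeC; split_ifs <;> positivity

theorem treeC_eq_one_iff {q n : ℕ} (hq : 0 < q) : treeC q n = 1 ↔ n = 0 := by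
  unfold treeC
  split_ifs with hn
  · simp [hn]
  · simp [mul_eq_one, hq.ne', hn]

theorem treeC_one_of_ne_zero {n : ℕ} (hn : n ≠ 0) : treeC 1 n = 2 := by
  simp [treeC, hn]

namespace HomTree

section General

variable {q : ℕ} {T : HomTree q} {p : ℝ} {n m : ℕ} {φ : T.V → T.V}

@[simp]
theorem mem_levelFinset {v : T.V} : v ∈ T.levelFinset n ↔ T.level v = n :=
  Set.Finite.mem_toFinset _

theorem card_levelFinset (T : HomTree q) (n : ℕ) : #(T.levelFinset n) = treeC q n :=
  T.card_level n

theorem levelFinset_zero : T.levelFinset 0 = {T.root} := by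
  ext v; simp [T.level_eq_zero_iff]

theorem levelFinset_nonempty (hq : 0 < q) (n : ℕ) : (T.levelFinset n).Nonempty :=
  card_pos.1 (by rw [card_levelFinset]; exact treeC_pos hq n)

theorem Mp_zero (hp : p ≠ 0) (f : T.V → ℂ) : T.Mp p 0 f = ‖f T.root‖ := by
  simp [Mp, levelFinset_zero, treeC, Real.rpow_rpow_inv (norm_nonneg _) hp]

theorem Mp_le_iff (hq : 0 < q) (hp : 0 < p) {C : ℝ} (hC : 0 ≤ C) {f : T.V → ℂ} :
    T.Mp p n f ≤ C ↔ ∑ v ∈ T.levelFinset n, ‖f v‖ ^ p ≤ treeC q n * C ^ p := by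
  have hc : (0 : ℝ) < treeC q n := by exact_mod_cast treeC_pos hq n
  rw [Mp, one_div p, Real.rpow_inv_le_iff_of_pos (by positivity) hC hp, one_div_mul_eq_div,
    div_le_iff₀ hc, mul_comm]

theorem Mp_le_one_iff (hq : 0 < q) (hp : 0 < p) {f : T.V → ℂ} :
    T.Mp p n f ≤ 1 ↔ ∑ v ∈ T.levelFinset n, ‖f v‖ ^ p ≤ treeC q n := by
  rw [Mp_le_iff hq hp zero_le_one, Real.one_rpow, mul_one]

theorem memTp_of_Mp_le {f : T.V → ℂ} {C : ℝ} (h : ∀ n, T.Mp p n f ≤ C) : T.memTp p f :=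
  ⟨C, by rintro _ ⟨n, rfl⟩; exact h n⟩

theorem normTp_zero (hp : p ≠ 0) : T.normTp p 0 = 0 := by
  simp [normTp, Mp, Real.zero_rpow hp, Real.zero_rpow (inv_ne_zero hp)]

theorem eq_zero_of_normTp_eq_zero (hq : 0 < q) (hp : 0 < p) {f : T.V → ℂ} (hf : T.memTp p f)
    (h : T.normTp p f = 0) : f = 0 := by
  funext v
  have hle : T.Mp p (T.level v) f ≤ 0 := h ▸ le_ciSup hf (T.level v)
  rw [Mp_le_iff hq hp le_rfl, Real.zero_rpow hp.ne', mul_zero] at hle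
  have hv : ‖f v‖ ^ p ≤ 0 :=
    (single_le_sum (fun u _ => by positivity) (mem_levelFinset.2 rfl)).trans hle
  by_contra hne
  exact (Real.rpow_pos_of_pos (norm_pos_iff.2 hne) p).not_ge hv

theorem Mp_comp_of_bijOn (h : Set.BijOn φ (T.levelFinset n) (T.levelFinset m)) (f : T.V → ℂ) :
    T.Mp p n (f ∘ φ) = T.Mp p m f := by
  have hc : treeC q n = treeC q m := by
    rw [← card_levelFinset, ← card_levelFinset]
    exact card_nbij φ h.mapsTo h.injOn h.surjOn
  unfold Mp
  rw [hc]
  congr 2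
  exact sum_nbij φ (fun _ hv => h.mapsTo hv) h.injOn h.surjOn fun _ _ => rfl

theorem Mp_comp_eq_Mp_zero (hp : p ≠ 0) (hn : (T.levelFinset n).Nonempty)
    (h : ∀ v ∈ T.levelFinset n, φ v = T.root) (f : T.V → ℂ) :
    T.Mp p n (f ∘ φ) = T.Mp p 0 f := by
  have hc : (treeC q n : ℝ) ≠ 0 := by
    rw [← card_levelFinset]; exact_mod_cast hn.card_pos.ne'
  have hsum : ∑ v ∈ T.levelFinset n, ‖(f ∘ φ) v‖ ^ p = treeC q n * ‖f T.root‖ ^ p := by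
    rw [← card_levelFinset, ← nsmul_eq_mul, ← sum_const]
    exact sum_congr rfl fun v hv => by rw [comp_apply, h v hv]
  rw [Mp_zero hp, Mp, hsum, ← mul_assoc, one_div_mul_cancel hc, one_mul, one_div,
    Real.rpow_rpow_inv (norm_nonneg _) hp]

theorem range_Mp_comp_eq (hq : 0 < q) (hsurj : Surjective φ) {f : T.V → ℂ}
    (h : ∀ v, T.Mp p (T.level v) (f ∘ φ) = T.Mp p (T.level (φ v)) f) :
    Set.range (fun n => T.Mp p n (f ∘ φ)) = Set.range (fun n => T.Mp p n f) := by
  ext x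
  constructor
  · rintro ⟨n, rfl⟩
    obtain ⟨v, hv⟩ := levelFinset_nonempty (T := T) hq n
    exact ⟨T.level (φ v), by dsimp only; rw [← h v, mem_levelFinset.1 hv]⟩
  · rintro ⟨m, rfl⟩
    obtain ⟨w, hw⟩ := levelFinset_nonempty (T := T) hq m
    obtain ⟨v, rfl⟩ := hsurj w
    exact ⟨T.level v, by dsimp only; rw [h v, mem_levelFinset.1 hw]⟩

variable (T) in
/-- Normalised so that each vertex of `S` contributes exactly `1` to `M_p(n, ·)^p`. -/
def levelWeight (p : ℝ) (S : Set T.V) : T.V → ℂ :=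
  S.indicator fun u => (((treeC q (T.level u) : ℝ) ^ (1 / p) : ℝ) : ℂ)

theorem norm_levelWeight_rpow (hp : p ≠ 0) (S : Set T.V) (u : T.V) :
    ‖T.levelWeight p S u‖ ^ p = S.indicator (fun u => (treeC q (T.level u) : ℝ)) u := by
  by_cases hu : u ∈ S
  · rw [levelWeight, Set.indicator_of_mem hu, Set.indicator_of_mem hu, Complex.norm_real,
      Real.norm_of_nonneg (by positivity), one_div, Real.rpow_inv_rpow (by positivity) hp]
  · simp [levelWeight, hu, Real.zero_rpow hp]

theorem Mp_levelWeight_le_one (hq : 0 < q) (hp : 0 < p) {S : Set T.V}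
    (hS : S.InjOn T.level) (n : ℕ) : T.Mp p n (T.levelWeight p S) ≤ 1 := by
  rw [Mp_le_one_iff hq hp]
  simp_rw [norm_levelWeight_rpow hp.ne', Set.indicator_apply, ← sum_filter]
  have hcard : #{u ∈ T.levelFinset n | u ∈ S} ≤ 1 := card_le_one.2 fun a ha b hb => by
    simp only [mem_filter, mem_levelFinset] at ha hb
    exact hS ha.2 hb.2 (ha.1.trans hb.1.symm)
  calc ∑ u ∈ T.levelFinset n with u ∈ S, (treeC q (T.level u) : ℝ)
      = #{u ∈ T.levelFinset n | u ∈ S} * treeC q n := by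
        rw [← nsmul_eq_mul, ← sum_const]
        exact sum_congr rfl fun u hu => by
          rw [mem_levelFinset.1 (mem_filter.1 hu).1]
    _ ≤ 1 * treeC q n := by gcongr; exact_mod_cast hcard
    _ = treeC q n := one_mul _

theorem Mp_comp_le_one (hmem : ∀ f : T.V → ℂ, T.memTp p f → T.memTp p (f ∘ φ))
    (hle : ∀ f : T.V → ℂ, T.memTp p f → T.normTp p (f ∘ φ) ≤ T.normTp p f)
    {f : T.V → ℂ} (hf : ∀ k, T.Mp p k f ≤ 1) (n : ℕ) : T.Mp p n (f ∘ φ) ≤ 1 :=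
  calc T.Mp p n (f ∘ φ) ≤ T.normTp p (f ∘ φ) := le_ciSup (hmem f (memTp_of_Mp_le hf)) n
    _ ≤ T.normTp p f := hle f (memTp_of_Mp_le hf)
    _ ≤ 1 := ciSup_le hf

theorem eq_root_of_injOn_level_image (hq : 0 < q) (hp : 0 < p)
    (hmem : ∀ f : T.V → ℂ, T.memTp p f → T.memTp p (f ∘ φ))
    (hle : ∀ f : T.V → ℂ, T.memTp p f → T.normTp p (f ∘ φ) ≤ T.normTp p f)
    (hS : (φ '' T.levelFinset n).InjOn T.level) : ∀ v ∈ T.levelFinset n, φ v = T.root := by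
  have h := Mp_comp_le_one hmem hle (Mp_levelWeight_le_one hq hp hS) n
  have hterm : ∀ v ∈ T.levelFinset n,
      ‖(T.levelWeight p (φ '' T.levelFinset n) ∘ φ) v‖ ^ p = treeC q (T.level (φ v)) :=
    fun v hv => by
      rw [comp_apply, norm_levelWeight_rpow hp.ne',
        Set.indicator_of_mem (Set.mem_image_of_mem φ hv)]
  rw [Mp_le_one_iff hq hp, sum_congr rfl hterm, ← card_levelFinset, card_eq_sum_ones,
    Nat.cast_sum] at h
  have hone : ∀ v ∈ T.levelFinset n, ((1 : ℕ) : ℝ) ≤ treeC q (T.level (φ v)) :=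
    fun v _ => by exact_mod_cast treeC_pos hq _
  intro v hv
  have hv1 := (sum_eq_sum_iff_of_le hone).1 (le_antisymm (sum_le_sum hone) h) v hv
  exact (T.level_eq_zero_iff _).1 ((treeC_eq_one_iff hq).1 (by exact_mod_cast hv1.symm))

theorem surjective_of_normTp_comp_eq (hq : 0 < q) (hp : 0 < p)
    (hiso : ∀ f : T.V → ℂ, T.memTp p f → T.normTp p (f ∘ φ) = T.normTp p f) :
    Surjective φ := by
  intro w
  by_contra hw
  simp only [not_exists] at hw
  have hf : T.memTp p (T.levelWeight p {w}) :=
    memTp_of_Mp_le (Mp_levelWeight_le_one hq hp (Set.injOn_singleton _ _))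
  have hcomp : T.levelWeight p {w} ∘ φ = 0 :=
    funext fun v => by simp [levelWeight, hw v]
  have hzero := eq_zero_of_normTp_eq_zero hq hp hf
    (by rw [← hiso _ hf, hcomp, normTp_zero hp.ne'])
  have hc : (0 : ℝ) < treeC q (T.level w) := by exact_mod_cast treeC_pos hq _
  have hfw := congrFun hzero w
  simp only [levelWeight, Set.indicator_of_mem (Set.mem_singleton w), Pi.zero_apply,
    Complex.ofReal_eq_zero] at hfw
  exact (Real.rpow_pos_of_pos hc _).ne' hfw

end General

section TwoHomogeneous

variable {T : HomTree 1} {p : ℝ} {φ : T.V → T.V}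

theorem levelFinset_eq_pair {v w : T.V} (hvw : v ≠ w) (h : T.level v = T.level w) :
    T.levelFinset (T.level v) = {v, w} := by
  have hn : T.level v ≠ 0 := fun h0 =>
    hvw (by rw [(T.level_eq_zero_iff v).1 h0, (T.level_eq_zero_iff w).1 (h ▸ h0)])
  refine (eq_of_subset_of_card_le ?_ ?_).symm
  · intro u hu
    rcases mem_insert.1 hu with rfl | hu
    · simp
    · simp [mem_singleton.1 hu, h]
  · rw [card_levelFinset, card_pair hvw, treeC_one_of_ne_zero hn]

theorem Mp_comp_level_eq (hp : p ≠ 0) (h1 : φ T.root = T.root)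
    (h3 : ∀ v w : T.V, T.level v = T.level w → T.level (φ v) = T.level (φ w))
    (h4 : ∀ w : T.V, φ w ≠ T.root →
      ∀ v₁ v₂ : T.V, T.level v₁ = T.level w → T.level v₂ = T.level w → φ v₁ = φ v₂ → v₁ = v₂)
    (f : T.V → ℂ) (v : T.V) : T.Mp p (T.level v) (f ∘ φ) = T.Mp p (T.level (φ v)) f := by
  by_cases hφv : T.level (φ v) = 0
  · rw [hφv]
    exact Mp_comp_eq_Mp_zero hp ⟨v, mem_levelFinset.2 rfl⟩ (fun u hu =>
      (T.level_eq_zero_iff _).1 ((h3 u v (mem_levelFinset.1 hu)).trans hφv)) f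
  have hv : T.level v ≠ 0 := fun h0 =>
    hφv (by rw [(T.level_eq_zero_iff v).1 h0, h1, T.level_eq_zero_iff])
  have hmaps : Set.MapsTo φ (T.levelFinset (T.level v)) (T.levelFinset (T.level (φ v))) :=
    fun u hu => mem_levelFinset.2 (h3 u v (mem_levelFinset.1 hu))
  have hinj : Set.InjOn φ (T.levelFinset (T.level v)) := fun u₁ hu₁ u₂ hu₂ =>
    h4 v (fun h => hφv (by rw [h, T.level_eq_zero_iff])) u₁ u₂
      (mem_levelFinset.1 hu₁) (mem_levelFinset.1 hu₂)
  refine Mp_comp_of_bijOn ⟨hmaps, hinj, surjOn_of_injOn_of_card_le φ hmaps hinj ?_⟩ f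
  rw [card_levelFinset, card_levelFinset, treeC_one_of_ne_zero hv, treeC_one_of_ne_zero hφv]

theorem eq_root_or_level_eq_of_level_eq (hp : 0 < p)
    (hmem : ∀ f : T.V → ℂ, T.memTp p f → T.memTp p (f ∘ φ))
    (hle : ∀ f : T.V → ℂ, T.memTp p f → T.normTp p (f ∘ φ) ≤ T.normTp p f)
    {v w : T.V} (hvw : v ≠ w) (h : T.level v = T.level w) :
    (φ v = T.root ∧ φ w = T.root) ∨ (φ v ≠ φ w ∧ T.level (φ v) = T.level (φ w)) := by
  by_cases hsep : φ v ≠ φ w ∧ T.level (φ v) = T.level (φ w)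
  · exact Or.inr hsep
  have hS : (φ '' T.levelFinset (T.level v)).InjOn T.level := by
    rw [levelFinset_eq_pair hvw h, coe_pair, Set.image_pair, Set.injOn_pair]
    exact fun hlev => not_not.1 fun hne => hsep ⟨hne, hlev⟩
  have hroot := eq_root_of_injOn_level_image one_pos hp hmem hle hS
  rw [levelFinset_eq_pair hvw h] at hroot
  exact Or.inl ⟨hroot v (by simp), hroot w (by simp)⟩

theorem eq_of_map_eq_of_map_ne_root (hp : 0 < p)
    (hmem : ∀ f : T.V → ℂ, T.memTp p f → T.memTp p (f ∘ φ))
    (hle : ∀ f : T.V → ℂ, T.memTp p f → T.normTp p (f ∘ φ) ≤ T.normTp p f)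
    {w v₁ v₂ : T.V} (hw : φ w ≠ T.root) (h₁ : T.level v₁ = T.level w)
    (h₂ : T.level v₂ = T.level w) (hφ : φ v₁ = φ v₂) : v₁ = v₂ := by
  by_contra hne
  have h₁₂ := h₁.trans h₂.symm
  rcases eq_root_or_level_eq_of_level_eq hp hmem hle hne h₁₂ with ⟨hv₁, hv₂⟩ | ⟨hne', -⟩
  · have hw_mem : w ∈ T.levelFinset (T.level v₁) := mem_levelFinset.2 h₁.symm
    rw [levelFinset_eq_pair hne h₁₂, mem_insert, mem_singleton] at hw_mem
    rcases hw_mem with rfl | rfl <;> contradiction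
  · exact hne' hφ

end TwoHomogeneous

end HomTree

open HomTree

/-- On the 2-homogeneous tree (`1 ≤ p < ∞`), `C_φ` is an isometry on `T_p` iff:
(1) `φ o = o`; (2) `φ` is surjective; (3) `|φ v| = |φ w|` whenever `|v| = |w|`;
(4) if `φ w ≠ o` then `φ` is injective on `D_{|w|}`. -/
theorem isometry_comp_Tp_iff_two_homogeneous (T : HomTree 1) (p : ℝ) (hp : 1 ≤ p)
    (phi : T.V → T.V) :
    ((∀ f : T.V → ℂ, T.memTp p f → T.memTp p (f ∘ phi)) ∧
      (∀ f : T.V → ℂ, T.memTp p f → T.normTp p (f ∘ phi) = T.normTp p f)) ↔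
    (phi T.root = T.root ∧
      Function.Surjective phi ∧
      (∀ v w : T.V, T.level v = T.level w → T.level (phi v) = T.level (phi w)) ∧
      (∀ w : T.V, phi w ≠ T.root →
        ∀ v₁ v₂ : T.V, T.level v₁ = T.level w → T.level v₂ = T.level w →
          phi v₁ = phi v₂ → v₁ = v₂)) := by
  have hp0 : 0 < p := by linarith
  constructor
  · rintro ⟨hmem, hiso⟩
    have hle := fun f hf => (hiso f hf).le
    have hroot := eq_root_of_injOn_level_image one_pos hp0 hmem hle (n := 0)
      (by simp [levelFinset_zero]) T.root (by simp [levelFinset_zero])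
    refine ⟨hroot, surjective_of_normTp_comp_eq one_pos hp0 hiso, fun v w hvw => ?_,
      fun w hw v₁ v₂ h₁ h₂ => eq_of_map_eq_of_map_ne_root hp0 hmem hle hw h₁ h₂⟩
    rcases eq_or_ne v w with rfl | hne
    · rfl
    rcases eq_root_or_level_eq_of_level_eq hp0 hmem hle hne hvw with ⟨hv, hw⟩ | ⟨-, hlev⟩
    · rw [hv, hw]
    · exact hlev
  · rintro ⟨h1, h2, h3, h4⟩
    have hrange := fun f => range_Mp_comp_eq one_pos h2 (Mp_comp_level_eq hp0.ne' h1 h3 h4 f)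
    refine ⟨fun f hf => ?_, fun f _ => congrArg sSup (hrange f)⟩
    change BddAbove _
    rw [hrange f]
    exact hf
end
end
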